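/- arXiv:2008.06658 — 4 statements merged into one kernel-verified Lean document; each statement's English description precedes it below -/
import Mathlib

section
/- Let f : A → X be a lattice isomorphic embedding of Banach lattices such that ‖x‖ ≤ ‖f(x)‖ ≤ C‖x‖ for all x ∈ A (f is an expansion and a C-embedding). Then there exists a norm |||·||| on X with (1/C)‖·‖ ≤ |||·||| ≤ ‖·‖, making (X, |||·|||) a Banach lattice with the same order, such that f : A → (X, |||·|||) is an isometric lattice embedding; its unit ball is the closed solid convex hull of f(B(A)) ∪ B(X). -/
/-!
Take `N x = inf {‖b‖ + ‖y‖ : |x| ≤ |f b| + |y|}`, the Minkowski functional of the solid convex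
hull of `f(B(A)) ∪ B(X)`. Since `f` preserves `|·|`, `N` is a lattice seminorm; `N ≤ ‖·‖` (take
`b = 0`) and `‖·‖ ≤ C N` because `‖f b‖ ≤ C ‖b‖`. On `f(A)` it is exact: if
`|f a| ≤ |f b| + |y|`, split `|a| = |a| ⊓ |b| + d`; then `f d ≤ |y|`, so expansivity gives
`‖d‖ ≤ ‖y‖` and `‖a‖ ≤ ‖b‖ + ‖y‖`. Finally `N` is 1-Lipschitz, so its unit ball is closed, and
a point with `N x < 1` is dominated by a convex combination of `|f b'|`, `|y'|` and `0` with
`b' ∈ B(A)`, `y' ∈ B(X)`, hence lies in every solid convex set containing `f(B(A)) ∪ B(X)`.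
-/

open Metric

/-- A set in a Banach lattice is solid if `|a| ≤ |b|` and `b ∈ S` imply `a ∈ S`. -/
def IsSolidSet {X : Type*} [Lattice X] [AddCommGroup X] (S : Set X) : Prop :=
  ∀ a b : X, |a| ≤ |b| → b ∈ S → a ∈ S

/-- The closed solid convex hull: the smallest closed solid convex set containing `S`. -/
def closedSolidConvexHull {X : Type*} [NormedAddCommGroup X] [Lattice X] [HasSolidNorm X] [IsOrderedAddMonoid X] [NormedSpace ℝ X]
    (S : Set X) : Set X :=
  ⋂₀ {T : Set X | IsClosed T ∧ Convex ℝ T ∧ IsSolidSet T ∧ S ⊆ T}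

open Filter Topology

section LatticeGroup
variable {G : Type*} [Lattice G] [AddCommGroup G] [IsOrderedAddMonoid G]

lemma nonneg_of_two_pow_nsmul_nonneg {y : G} : ∀ {k : ℕ}, 0 ≤ 2 ^ k • y → 0 ≤ y
  | 0, h => by simpa using h
  | k + 1, h => nonneg_of_two_pow_nsmul_nonneg <| nsmul_two_semiclosed <| by
      rwa [← mul_nsmul, ← pow_succ]

lemma sub_inf_le_of_le_add {x z w : G} (hw : 0 ≤ w) (h : x ≤ z + w) : x - x ⊓ z ≤ w :=
  sub_le_comm.1 <| le_inf (sub_le_self x hw) (sub_le_iff_le_add.2 h)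

lemma map_abs_of_map_inf {H F : Type*} [Lattice H] [AddCommGroup H] [IsOrderedAddMonoid H]
    [FunLike F G H] [AddMonoidHomClass F G H] (f : F) (hf : ∀ a b, f (a ⊓ b) = f a ⊓ f b)
    (a : G) : f |a| = |f a| := by
  change f (a ⊔ -a) = f a ⊔ -f a
  rw [show a ⊔ -a = -(-a ⊓ a) by rw [neg_inf, neg_neg], map_neg, hf, map_neg, neg_inf, neg_neg]

variable [Module ℝ G] [PosSMulMono ℝ G]

lemma abs_smul' (c : ℝ) (x : G) : |c • x| = |c| • |x| := by
  have hpos : ∀ c : ℝ, 0 ≤ c → |c • x| = c • |x| := fun c hc => by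
    rcases hc.eq_or_lt with rfl | hc
    · simp
    · have h := (OrderIso.smulRight hc).map_sup x (-x)
      simp only [OrderIso.smulRight_apply, smul_neg] at h
      rw [abs, abs, h]
  rcases le_total 0 c with hc | hc
  · rw [hpos c hc, abs_of_nonneg hc]
  · rw [← abs_neg, ← neg_smul, hpos _ (neg_nonneg.2 hc), abs_of_nonpos hc]

end LatticeGroup

section NormedLattice
variable {X : Type*} [NormedAddCommGroup X] [Lattice X] [HasSolidNorm X] [IsOrderedAddMonoid X]
  [NormedSpace ℝ X]

/-- `c • x ≥ 0` for dyadic `c ≥ 0` because `0 ≤ 2 • z` forces `0 ≤ z` in a lattice-ordered group,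
and then for all `c ≥ 0` because the positive cone is closed. -/
instance HasSolidNorm.toPosSMulMono : PosSMulMono ℝ X := .of_smul_nonneg fun c hc x hx => by
  set d : ℕ → ℝ := fun n => (⌊c * 2 ^ n⌋₊ : ℝ) / 2 ^ n
  have hd : Tendsto d atTop (𝓝 c) :=
    (tendsto_nat_floor_mul_div_atTop hc).comp (tendsto_pow_atTop_atTop_of_one_lt one_lt_two)
  refine isClosed_nonneg.mem_of_tendsto (hd.smul_const x) (Eventually.of_forall fun n => ?_)
  refine nonneg_of_two_pow_nsmul_nonneg (k := n) ?_
  have h2 : (2 : ℝ) ^ n ≠ 0 := by positivity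
  rw [← Nat.cast_smul_eq_nsmul ℝ, smul_smul, Nat.cast_pow, Nat.cast_ofNat,
    mul_div_cancel₀ _ h2, Nat.cast_smul_eq_nsmul]
  exact nsmul_nonneg hx _

end NormedLattice

section Convex
variable {E : Type*} [AddCommGroup E] [Module ℝ E]

lemma Convex.smul_add_smul_mem_of_zero_mem {T : Set E} (hT : Convex ℝ T) (h0 : (0 : E) ∈ T)
    {u v : E} (hu : u ∈ T) (hv : v ∈ T) {s t : ℝ} (hs : 0 ≤ s) (ht : 0 ≤ t) (hst : s + t ≤ 1) :
    s • u + t • v ∈ T := by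
  rcases (add_nonneg hs ht).eq_or_lt with h | h
  · obtain rfl : s = 0 := by linarith
    obtain rfl : t = 0 := by linarith
    simpa using h0
  · have hw := hT hu hv (div_nonneg hs h.le) (div_nonneg ht h.le)
      (by rw [← add_div, div_self h.ne'])
    convert (hT.starConvex h0).smul_mem hw h.le hst using 1
    rw [smul_add, smul_smul, smul_smul, mul_div_cancel₀ _ h.ne', mul_div_cancel₀ _ h.ne']

end Convex

lemma exists_mem_closedBall_norm_smul_eq {E : Type*} [NormedAddCommGroup E] [NormedSpace ℝ E]
    (b : E) : ∃ b' ∈ closedBall (0 : E) 1, ‖b‖ • b' = b := by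
  by_cases hb : b = 0
  · exact ⟨0, mem_closedBall_self zero_le_one, by simp [hb]⟩
  · refine ⟨‖b‖⁻¹ • b, ?_, smul_inv_smul₀ (norm_ne_zero_iff.2 hb) b⟩
    rw [mem_closedBall_zero_iff, norm_smul, norm_inv, norm_norm,
      inv_mul_cancel₀ (norm_ne_zero_iff.2 hb)]

lemma norm_le_add_of_abs_le_abs_add_abs {X : Type*} [NormedAddCommGroup X] [Lattice X]
    [HasSolidNorm X] [IsOrderedAddMonoid X] {x u v : X} (h : |x| ≤ |u| + |v|) :
    ‖x‖ ≤ ‖u‖ + ‖v‖ :=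
  calc ‖x‖ ≤ ‖|u| + |v|‖ :=
        norm_le_norm_of_abs_le_abs <| by
          rwa [abs_of_nonneg (add_nonneg (abs_nonneg u) (abs_nonneg v))]
    _ ≤ ‖u‖ + ‖v‖ := by simpa only [norm_abs_eq_norm] using norm_add_le |u| |v|

section EmbeddingNorm
variable {A X : Type*} [NormedAddCommGroup A] [NormedSpace ℝ A]
  [NormedAddCommGroup X] [Lattice X] [NormedSpace ℝ X] (f : A →ₗ[ℝ] X)

noncomputable def embeddingNorm (x : X) : ℝ :=
  sInf {r | ∃ b y, |x| ≤ |f b| + |y| ∧ ‖b‖ + ‖y‖ = r}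

lemma embeddingNorm_le {x y : X} {b : A} (h : |x| ≤ |f b| + |y|) :
    embeddingNorm f x ≤ ‖b‖ + ‖y‖ :=
  csInf_le ⟨0, by rintro _ ⟨b, y, -, rfl⟩; positivity⟩ ⟨b, y, h, rfl⟩

variable [IsOrderedAddMonoid X]

lemma embeddingNorm_set_nonempty (x : X) :
    {r | ∃ b y, |x| ≤ |f b| + |y| ∧ ‖b‖ + ‖y‖ = r}.Nonempty :=
  ⟨_, 0, x, by simp, rfl⟩

lemma le_embeddingNorm {x : X} {r : ℝ} (h : ∀ b y, |x| ≤ |f b| + |y| → r ≤ ‖b‖ + ‖y‖) :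
    r ≤ embeddingNorm f x :=
  le_csInf (embeddingNorm_set_nonempty f x) (by rintro _ ⟨b, y, hby, rfl⟩; exact h b y hby)

lemma exists_lt_of_embeddingNorm_lt {x : X} {r : ℝ} (h : embeddingNorm f x < r) :
    ∃ b y, |x| ≤ |f b| + |y| ∧ ‖b‖ + ‖y‖ < r := by
  obtain ⟨_, ⟨b, y, hby, rfl⟩, hr⟩ := exists_lt_of_csInf_lt (embeddingNorm_set_nonempty f x) h
  exact ⟨b, y, hby, hr⟩

lemma embeddingNorm_nonneg (x : X) : 0 ≤ embeddingNorm f x :=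
  le_embeddingNorm f fun _ _ _ => by positivity

lemma embeddingNorm_le_norm (x : X) : embeddingNorm f x ≤ ‖x‖ := by
  simpa using embeddingNorm_le f (b := 0) (y := x) (by simp)

lemma embeddingNorm_zero : embeddingNorm f 0 = 0 :=
  le_antisymm (by simpa using embeddingNorm_le_norm f 0) (embeddingNorm_nonneg f 0)

variable [HasSolidNorm X]

lemma norm_le_mul_embeddingNorm {C : ℝ} (hC : 1 ≤ C) (hbd : ∀ a, ‖f a‖ ≤ C * ‖a‖) (x : X) :
    ‖x‖ ≤ C * embeddingNorm f x := by
  have hC0 : 0 < C := zero_lt_one.trans_le hC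
  rw [← div_le_iff₀' hC0]
  refine le_embeddingNorm f fun b y h => ?_
  rw [div_le_iff₀' hC0]
  calc ‖x‖ ≤ ‖f b‖ + ‖y‖ := norm_le_add_of_abs_le_abs_add_abs h
    _ ≤ C * ‖b‖ + C * ‖y‖ := add_le_add (hbd b) (le_mul_of_one_le_left (norm_nonneg y) hC)
    _ = C * (‖b‖ + ‖y‖) := (mul_add C _ _).symm

lemma embeddingNorm_eq_zero_iff {C : ℝ} (hC : 1 ≤ C) (hbd : ∀ a, ‖f a‖ ≤ C * ‖a‖) {x : X} :
    embeddingNorm f x = 0 ↔ x = 0 := by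
  refine ⟨fun h => norm_le_zero_iff.1 ?_, fun h => h ▸ embeddingNorm_zero f⟩
  simpa [h] using norm_le_mul_embeddingNorm f hC hbd x

lemma embeddingNorm_smul_le (c : ℝ) (x : X) :
    embeddingNorm f (c • x) ≤ |c| * embeddingNorm f x := by
  rcases eq_or_ne c 0 with rfl | hc
  · simp [embeddingNorm_zero]
  have hc' : 0 < |c| := abs_pos.2 hc
  rw [← div_le_iff₀' hc']
  refine le_embeddingNorm f fun b y h => ?_
  rw [div_le_iff₀' hc']
  calc embeddingNorm f (c • x) ≤ ‖c • b‖ + ‖c • y‖ := by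
        refine embeddingNorm_le f ?_
        rw [map_smul, abs_smul', abs_smul', abs_smul', ← smul_add]
        exact smul_le_smul_of_nonneg_left h hc'.le
    _ = |c| * (‖b‖ + ‖y‖) := by rw [norm_smul, norm_smul, Real.norm_eq_abs, mul_add]

lemma embeddingNorm_smul (c : ℝ) (x : X) : embeddingNorm f (c • x) = |c| * embeddingNorm f x := by
  rcases eq_or_ne c 0 with rfl | hc
  · simp [embeddingNorm_zero]
  refine (embeddingNorm_smul_le f c x).antisymm ?_
  calc |c| * embeddingNorm f x = |c| * embeddingNorm f (c⁻¹ • c • x) := by rw [inv_smul_smul₀ hc]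
    _ ≤ |c| * (|c⁻¹| * embeddingNorm f (c • x)) := by gcongr; exact embeddingNorm_smul_le f _ _
    _ = embeddingNorm f (c • x) := by
        rw [abs_inv, ← mul_assoc, mul_inv_cancel₀ (abs_ne_zero.2 hc), one_mul]

lemma mem_of_embeddingNorm_lt_one {T : Set X} (hconv : Convex ℝ T) (hsolid : IsSolidSet T)
    (hsub : f '' closedBall 0 1 ∪ closedBall 0 1 ⊆ T) {x : X} (hx : embeddingNorm f x < 1) :
    x ∈ T := by
  obtain ⟨b, y, hxy, hlt⟩ := exists_lt_of_embeddingNorm_lt f hx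
  obtain ⟨b', hb', hb⟩ := exists_mem_closedBall_norm_smul_eq b
  obtain ⟨y', hy', hy⟩ := exists_mem_closedBall_norm_smul_eq y
  have habs : ∀ z ∈ T, |z| ∈ T := fun z hz => hsolid _ _ (abs_abs z).le hz
  have hsum : |f b| + |y| ∈ T := by
    rw [← hb, ← hy, map_smul, abs_smul', abs_smul', abs_norm, abs_norm]
    exact hconv.smul_add_smul_mem_of_zero_mem (hsub (Or.inr (mem_closedBall_self zero_le_one)))
      (habs _ (hsub (Or.inl ⟨b', hb', rfl⟩))) (habs _ (hsub (Or.inr hy')))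
      (norm_nonneg b) (norm_nonneg y) hlt.le
  exact hsolid _ _ (hxy.trans (le_abs_self _)) hsum

lemma mem_of_embeddingNorm_le_one {T : Set X} (hclosed : IsClosed T) (hconv : Convex ℝ T)
    (hsolid : IsSolidSet T) (hsub : f '' closedBall 0 1 ∪ closedBall 0 1 ⊆ T) {x : X}
    (hx : embeddingNorm f x ≤ 1) : x ∈ T := by
  have hlim : Tendsto (fun t : ℝ => t • x) (𝓝[<] 1) (𝓝 x) :=
    ((continuous_id.smul continuous_const).tendsto' 1 x (one_smul ℝ x)).mono_left
      nhdsWithin_le_nhds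
  refine hclosed.mem_of_tendsto hlim ?_
  filter_upwards [Ioo_mem_nhdsLT zero_lt_one] with t ht
  refine mem_of_embeddingNorm_lt_one f hconv hsolid hsub ?_
  rw [embeddingNorm_smul f, abs_of_pos ht.1]
  calc t * embeddingNorm f x ≤ t * 1 := by gcongr; exact ht.1.le
    _ < 1 := by linarith [ht.2]

variable [Lattice A] [HasSolidNorm A] [IsOrderedAddMonoid A] {f}

lemma embeddingNorm_le_add_of_abs_le (hf : ∀ a, f |a| = |f a|) {x u v : X}
    (h : |x| ≤ |u| + |v|) : embeddingNorm f x ≤ embeddingNorm f u + embeddingNorm f v := by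
  refine le_of_forall_pos_lt_add fun ε hε => ?_
  obtain ⟨b₁, y₁, h₁, hlt₁⟩ :=
    exists_lt_of_embeddingNorm_lt f (lt_add_of_pos_right (embeddingNorm f u) (half_pos hε))
  obtain ⟨b₂, y₂, h₂, hlt₂⟩ :=
    exists_lt_of_embeddingNorm_lt f (lt_add_of_pos_right (embeddingNorm f v) (half_pos hε))
  have hdom : |x| ≤ |f (|b₁| + |b₂|)| + |(|y₁| + |y₂|)| := by
    rw [map_add, hf, hf, abs_of_nonneg (add_nonneg (abs_nonneg (f b₁)) (abs_nonneg (f b₂))),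
      abs_of_nonneg (add_nonneg (abs_nonneg y₁) (abs_nonneg y₂))]
    calc |x| ≤ |u| + |v| := h
      _ ≤ (|f b₁| + |y₁|) + (|f b₂| + |y₂|) := add_le_add h₁ h₂
      _ = |f b₁| + |f b₂| + (|y₁| + |y₂|) := by abel
  have hb := norm_add_le |b₁| |b₂|
  have hy := norm_add_le |y₁| |y₂|
  simp only [norm_abs_eq_norm] at hb hy
  linarith [embeddingNorm_le f hdom]

lemma embeddingNorm_add_le (hf : ∀ a, f |a| = |f a|) (x y : X) :
    embeddingNorm f (x + y) ≤ embeddingNorm f x + embeddingNorm f y :=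
  embeddingNorm_le_add_of_abs_le hf (abs_add_le x y)

lemma embeddingNorm_mono (hf : ∀ a, f |a| = |f a|) {x y : X} (h : |x| ≤ |y|) :
    embeddingNorm f x ≤ embeddingNorm f y := by
  simpa [embeddingNorm_zero] using embeddingNorm_le_add_of_abs_le hf (v := 0) (by simpa using h)

lemma continuous_embeddingNorm (hf : ∀ a, f |a| = |f a|) : Continuous (embeddingNorm f) :=
  LipschitzWith.continuous <| LipschitzWith.of_le_add fun x y =>
    calc embeddingNorm f x = embeddingNorm f (y + (x - y)) := by rw [add_sub_cancel]
      _ ≤ embeddingNorm f y + embeddingNorm f (x - y) := embeddingNorm_add_le hf _ _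
      _ ≤ embeddingNorm f y + dist x y := by
          rw [dist_eq_norm]; gcongr; exact embeddingNorm_le_norm f _

lemma convex_setOf_embeddingNorm_le (hf : ∀ a, f |a| = |f a|) (r : ℝ) :
    Convex ℝ {x | embeddingNorm f x ≤ r} := fun x hx y hy s t hs ht hst =>
  calc embeddingNorm f (s • x + t • y) ≤ embeddingNorm f (s • x) + embeddingNorm f (t • y) :=
        embeddingNorm_add_le hf _ _
    _ = s * embeddingNorm f x + t * embeddingNorm f y := by
        rw [embeddingNorm_smul, embeddingNorm_smul, abs_of_nonneg hs, abs_of_nonneg ht]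
    _ ≤ s * r + t * r := by gcongr <;> assumption
    _ = r := by rw [← add_mul, hst, one_mul]

lemma isSolidSet_setOf_embeddingNorm_le (hf : ∀ a, f |a| = |f a|) (r : ℝ) :
    IsSolidSet {x | embeddingNorm f x ≤ r} :=
  fun _ _ h hy => (embeddingNorm_mono hf h).trans hy

lemma norm_le_add_of_abs_map_le (hlat : ∀ a b, f (a ⊓ b) = f a ⊓ f b)
    (hexp : ∀ a, ‖a‖ ≤ ‖f a‖) {a b : A} {y : X} (h : |f a| ≤ |f b| + |y|) :
    ‖a‖ ≤ ‖b‖ + ‖y‖ := by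
  have hf := map_abs_of_map_inf f hlat
  set d := |a| - |a| ⊓ |b|
  have hd0 : 0 ≤ d := sub_nonneg.2 inf_le_left
  have hfd : f d ≤ |y| := by
    rw [map_sub, hlat, hf, hf]
    exact sub_inf_le_of_le_add (abs_nonneg y) h
  have hd : ‖d‖ ≤ ‖y‖ :=
    (hexp d).trans (norm_le_norm_of_abs_le_abs (by rwa [← hf, abs_of_nonneg hd0]))
  have hinf : ‖|a| ⊓ |b|‖ ≤ ‖b‖ := norm_le_norm_of_abs_le_abs <| by
    rw [abs_of_nonneg (le_inf (abs_nonneg a) (abs_nonneg b))]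
    exact inf_le_right
  calc ‖a‖ = ‖|a| ⊓ |b| + d‖ := by rw [add_sub_cancel, norm_abs_eq_norm]
    _ ≤ ‖|a| ⊓ |b|‖ + ‖d‖ := norm_add_le _ _
    _ ≤ ‖b‖ + ‖y‖ := add_le_add hinf hd

lemma embeddingNorm_map (hlat : ∀ a b, f (a ⊓ b) = f a ⊓ f b) (hexp : ∀ a, ‖a‖ ≤ ‖f a‖)
    (a : A) : embeddingNorm f (f a) = ‖a‖ :=
  le_antisymm (by simpa using embeddingNorm_le f (b := a) (y := 0) (by simp))
    (le_embeddingNorm f fun _ _ h => norm_le_add_of_abs_map_le hlat hexp h)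

end EmbeddingNorm

theorem stmt7_general {A X : Type*}
    [NormedAddCommGroup A] [Lattice A] [HasSolidNorm A] [IsOrderedAddMonoid A] [NormedSpace ℝ A]
    [NormedAddCommGroup X] [Lattice X] [HasSolidNorm X] [IsOrderedAddMonoid X] [NormedSpace ℝ X]
    {C : ℝ} (hC : 1 ≤ C)
    (f : A →ₗ[ℝ] X)
    (hlat : ∀ a b : A, f (a ⊓ b) = f a ⊓ f b)
    (hexp : ∀ a : A, ‖a‖ ≤ ‖f a‖) (hbd : ∀ a : A, ‖f a‖ ≤ C * ‖a‖) :
    ∃ N : X → ℝ,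
      (∀ x, 0 ≤ N x) ∧
      (∀ x, N x = 0 ↔ x = 0) ∧
      (∀ x y, N (x + y) ≤ N x + N y) ∧
      (∀ (c : ℝ) (x : X), N (c • x) = |c| * N x) ∧
      (∀ x y : X, |x| ≤ |y| → N x ≤ N y) ∧
      (∀ x : X, (1 / C) * ‖x‖ ≤ N x ∧ N x ≤ ‖x‖) ∧
      (∀ a : A, N (f a) = ‖a‖) ∧
      {x : X | N x ≤ 1} =
        closedSolidConvexHull (f '' closedBall (0 : A) 1 ∪ closedBall (0 : X) 1) := by
  have hf := map_abs_of_map_inf f hlat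
  have hball : f '' closedBall 0 1 ∪ closedBall 0 1 ⊆ {x | embeddingNorm f x ≤ 1} := by
    rintro _ (⟨a, ha, rfl⟩ | hx)
    · simpa [embeddingNorm_map hlat hexp] using ha
    · exact (embeddingNorm_le_norm f _).trans (mem_closedBall_zero_iff.1 hx)
  refine ⟨embeddingNorm f, embeddingNorm_nonneg f, fun x => embeddingNorm_eq_zero_iff f hC hbd,
    embeddingNorm_add_le hf, embeddingNorm_smul f, fun x y => embeddingNorm_mono hf,
    fun x => ⟨?_, embeddingNorm_le_norm f x⟩, embeddingNorm_map hlat hexp, ?_⟩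
  · rw [one_div, inv_mul_le_iff₀ (zero_lt_one.trans_le hC)]
    exact norm_le_mul_embeddingNorm f hC hbd x
  · refine Set.Subset.antisymm (fun x hx => Set.mem_sInter.2 ?_) (Set.sInter_subset_of_mem
      ⟨isClosed_le (continuous_embeddingNorm hf) continuous_const,
        convex_setOf_embeddingNorm_le hf 1, isSolidSet_setOf_embeddingNorm_le hf 1, hball⟩)
    rintro T ⟨hclosed, hconv, hsolid, hsub⟩
    exact mem_of_embeddingNorm_le_one f hclosed hconv hsolid hsub hx

/-- If `f : A → X` is an expansive lattice `C`-embedding of Banach lattices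
(`‖a‖ ≤ ‖f a‖ ≤ C‖a‖`), then there is an equivalent lattice norm `N` on `X` with
`(1/C)‖·‖ ≤ N ≤ ‖·‖`, whose unit ball is the closed solid convex hull of
`f(B(A)) ∪ B(X)`, making `f` an isometric lattice embedding. -/
theorem stmt7 {A X : Type*}
    [NormedAddCommGroup A] [Lattice A] [HasSolidNorm A] [IsOrderedAddMonoid A] [NormedSpace ℝ A] [CompleteSpace A]
    [NormedAddCommGroup X] [Lattice X] [HasSolidNorm X] [IsOrderedAddMonoid X] [NormedSpace ℝ X] [CompleteSpace X]
    {C : ℝ} (hC : 1 ≤ C)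
    (f : A →ₗ[ℝ] X) (hinj : Function.Injective f)
    (hlat : ∀ a b : A, f (a ⊓ b) = f a ⊓ f b)
    (hexp : ∀ a : A, ‖a‖ ≤ ‖f a‖) (hbd : ∀ a : A, ‖f a‖ ≤ C * ‖a‖) :
    ∃ N : X → ℝ,
      (∀ x, 0 ≤ N x) ∧
      (∀ x, N x = 0 ↔ x = 0) ∧
      (∀ x y, N (x + y) ≤ N x + N y) ∧
      (∀ (c : ℝ) (x : X), N (c • x) = |c| * N x) ∧
      (∀ x y : X, |x| ≤ |y| → N x ≤ N y) ∧
      (∀ x : X, (1 / C) * ‖x‖ ≤ N x ∧ N x ≤ ‖x‖) ∧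
      (∀ a : A, N (f a) = ‖a‖) ∧
      {x : X | N x ≤ 1} =
        closedSolidConvexHull (f '' closedBall (0 : A) 1 ∪ closedBall (0 : X) 1) :=
  stmt7_general hC f hlat hexp hbd
end

section
/- Let F be a finite dimensional Banach lattice with atoms e₁,…,e_m and fⱼ : F → ℓ∞^N(ℓ₁^M) (j = 1, 2) two C-isometric lattice embeddings with C ≥ 1. Writing A(l,i) (resp. B(l,i)) for the total mass of f₁(e_i) (resp. f₂(e_i)) in row l, each row vector A(l) ∈ ℝ^m lies in C² times the solid convex hull of the row vectors {B(k) : 1 ≤ k ≤ N}; in particular, if both f_j are isometric embeddings, the solid convex hulls of the two sets of row vectors coincide. -/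
open Pointwise
/-- The norm of `ℓ∞^N(ℓ₁^M)`: max over rows of the `ℓ₁`-norms of the rows. -/
noncomputable def linfl1Norm {N M : ℕ} (v : Fin N → Fin M → ℝ) : ℝ :=
  ⨆ k, ∑ j, |v k j|

/-- The solid convex hull of a set in `ℝ^m` (with the coordinatewise order): the smallest
convex set containing `S` that is solid. -/
def solidConvexHull {m : ℕ} (S : Set (Fin m → ℝ)) : Set (Fin m → ℝ) :=
  ⋂₀ {T : Set (Fin m → ℝ) | Convex ℝ T ∧ (∀ a b : Fin m → ℝ, |a| ≤ |b| → b ∈ T → a ∈ T) ∧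
      S ⊆ T}

/-! For `t ≥ 0` and `x = ∑ tᵢ eᵢ` the element `f x` is positive, and its `ℓ∞(ℓ₁)`-norm is
`⨆ k, t ⬝ᵥ B k`, where `B k = (∑ j, f (e i) k j)ᵢ` is the vector of row masses. The norm bounds
therefore give `t ⬝ᵥ A l ≤ C² ⨆ k, t ⬝ᵥ B k` for every `t ≥ 0`, and a Farkas-type duality
(separating a point from the lower closure of the convex hull of the `B k` by a positive
functional) turns this into membership of `A l` in `C²` times the solid convex hull. -/

section SolidConvexHull

variable {m : ℕ} {S T : Set (Fin m → ℝ)}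

theorem convex_solidConvexHull : Convex ℝ (solidConvexHull S) :=
  convex_sInter fun _ hT => hT.1

theorem mem_solidConvexHull_of_abs_le {a b : Fin m → ℝ} (hab : |a| ≤ |b|)
    (hb : b ∈ solidConvexHull S) : a ∈ solidConvexHull S :=
  fun _ hT => hT.2.1 a b hab (hb _ hT)

theorem subset_solidConvexHull : S ⊆ solidConvexHull S :=
  Set.subset_sInter fun _ hT => hT.2.2

theorem solidConvexHull_subset_solidConvexHull (h : S ⊆ solidConvexHull T) :
    solidConvexHull S ⊆ solidConvexHull T :=
  Set.sInter_subset_of_mem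
    ⟨convex_solidConvexHull, fun _ _ => mem_solidConvexHull_of_abs_le, h⟩

theorem mem_solidConvexHull_of_le_mem_convexHull (hS : ∀ w ∈ S, 0 ≤ w) {v b : Fin m → ℝ}
    (hv : 0 ≤ v) (hvb : v ≤ b) (hb : b ∈ convexHull ℝ S) : v ∈ solidConvexHull S := by
  have hb0 : 0 ≤ b := convexHull_min hS (convex_Ici 0) hb
  refine mem_solidConvexHull_of_abs_le ?_
    (convexHull_min subset_solidConvexHull convex_solidConvexHull hb)
  rwa [abs_of_nonneg hv, abs_of_nonneg hb0]

end SolidConvexHull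

theorem Convex.lowerClosure {𝕜 E : Type*} [Semiring 𝕜] [PartialOrder 𝕜] [AddCommMonoid E]
    [PartialOrder E] [IsOrderedAddMonoid E] [Module 𝕜 E] [PosSMulMono 𝕜 E] {s : Set E}
    (hs : Convex 𝕜 s) : Convex 𝕜 (lowerClosure s : Set E) := by
  rintro x ⟨a, ha, hxa⟩ y ⟨b, hb, hyb⟩ θ η hθ hη hθη
  exact ⟨θ • a + η • b, hs ha hb hθ hη hθη,
    add_le_add (smul_le_smul_of_nonneg_left hxa hθ) (smul_le_smul_of_nonneg_left hyb hη)⟩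

theorem exists_nonneg_dotProduct_separating {n : Type*} [Fintype n] {D : Set (n → ℝ)}
    (hconv : Convex ℝ D) (hclosed : IsClosed D) (hlower : IsLowerSet D) (hne : D.Nonempty)
    {v : n → ℝ} (hv : v ∉ D) :
    ∃ t : n → ℝ, 0 ≤ t ∧ ∃ u, (∀ d ∈ D, t ⬝ᵥ d < u) ∧ u < t ⬝ᵥ v := by
  classical
  obtain ⟨φ, u, hφD, hφv⟩ := geometric_hahn_banach_closed_point hconv hclosed hv
  set t : n → ℝ := fun i => φ (Pi.single i 1)
  have hφ : ∀ y, φ y = t ⬝ᵥ y := fun y => by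
    conv_lhs => rw [← Finset.univ_sum_single y]
    simp only [map_sum, dotProduct, t, mul_comm]
    refine Finset.sum_congr rfl fun i _ => ?_
    rw [← smul_eq_mul, ← map_smul, ← Pi.single_smul', smul_eq_mul, mul_one]
  refine ⟨t, fun i => ?_, u, fun d hd => hφ d ▸ hφD d hd, hφ v ▸ hφv⟩
  obtain ⟨d, hd⟩ := hne
  by_contra! hti
  -- `D` is a lower set, so `d - s • Pi.single i 1 ∈ D` for all `s ≥ 0`; if `t i < 0` this
  -- drives `φ` up to `u`.
  set s := (u - φ d) / -t i
  have hs : 0 ≤ s := div_nonneg (sub_nonneg.2 (hφD d hd).le) (neg_nonneg.2 hti.le)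
  have hmem : d - s • Pi.single i 1 ∈ D :=
    hlower (sub_le_self _ (smul_nonneg hs (Pi.single_nonneg.2 zero_le_one))) hd
  have hst : s * -t i = u - φ d := div_mul_cancel₀ _ (neg_ne_zero.2 hti.ne)
  have := hφD _ hmem
  rw [map_sub, map_smul, smul_eq_mul] at this
  linarith

theorem exists_le_mem_convexHull_of_dotProduct_le {ι n : Type*} [Finite ι] [Nonempty ι]
    [Fintype n] (B : ι → n → ℝ) {v : n → ℝ}
    (h : ∀ t : n → ℝ, 0 ≤ t → t ⬝ᵥ v ≤ ⨆ k, t ⬝ᵥ B k) :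
    ∃ b ∈ convexHull ℝ (Set.range B), v ≤ b := by
  have hK : IsCompact (convexHull ℝ (Set.range B)) :=
    (Set.finite_range B).isCompact_convexHull ℝ
  by_contra! hv
  obtain ⟨t, ht, u, hD, hu⟩ := exists_nonneg_dotProduct_separating
    (convex_convexHull ℝ _).lowerClosure (hK.isClosed.lowerClosure_pi hK.isBounded.bddAbove)
    (lowerClosure _).lower
    ⟨B (Classical.arbitrary ι), subset_lowerClosure (subset_convexHull ℝ _ ⟨_, rfl⟩)⟩
    (fun hmem => by
      obtain ⟨b, hb, hvb⟩ := mem_lowerClosure.1 hmem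
      exact hv b hb hvb)
  have hsup : ⨆ k, t ⬝ᵥ B k ≤ u :=
    ciSup_le fun k => (hD _ (subset_lowerClosure (subset_convexHull ℝ _ ⟨k, rfl⟩))).le
  linarith [h t ht]

theorem mem_solidConvexHull_of_dotProduct_le {ι : Type*} [Finite ι] [Nonempty ι] {m : ℕ}
    (B : ι → Fin m → ℝ) (hB : ∀ k, 0 ≤ B k) {v : Fin m → ℝ} (hv : 0 ≤ v)
    (h : ∀ t : Fin m → ℝ, 0 ≤ t → t ⬝ᵥ v ≤ ⨆ k, t ⬝ᵥ B k) :
    v ∈ solidConvexHull (Set.range B) := by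
  obtain ⟨b, hb, hvb⟩ := exists_le_mem_convexHull_of_dotProduct_le B h
  exact mem_solidConvexHull_of_le_mem_convexHull (by rintro _ ⟨k, rfl⟩; exact hB k) hv hvb hb

theorem linfl1Norm_sum_smul {ι : Type*} [Fintype ι] {N M : ℕ} (x : ι → Fin N → Fin M → ℝ)
    (hx : ∀ i, 0 ≤ x i) {t : ι → ℝ} (ht : 0 ≤ t) :
    linfl1Norm (∑ i, t i • x i) = ⨆ k, t ⬝ᵥ fun i => ∑ j, x i k j := by
  refine iSup_congr fun k => ?_
  have hcoord : ∀ j, (∑ i, t i • x i) k j = ∑ i, t i * x i k j := fun j => by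
    simp only [Finset.sum_apply, Pi.smul_apply, smul_eq_mul]
  calc ∑ j, |(∑ i, t i • x i) k j| = ∑ j, ∑ i, t i * x i k j := by
        refine Finset.sum_congr rfl fun j _ => ?_
        rw [hcoord, abs_of_nonneg (Finset.sum_nonneg fun i _ => mul_nonneg (ht i) (hx i k j))]
    _ = t ⬝ᵥ fun i => ∑ j, x i k j := by
        simp only [dotProduct, Finset.mul_sum]
        exact Finset.sum_comm

theorem map_nonneg_of_map_inf {α β : Type*} [SemilatticeInf α] [SemilatticeInf β] [Zero α]
    [Zero β] {f : α → β} (hf : ∀ x y, f (x ⊓ y) = f x ⊓ f y) (hf0 : f 0 = 0) {x : α}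
    (hx : 0 ≤ x) : 0 ≤ f x :=
  hf0 ▸ OrderHomClass.mono (InfHom.mk f hf) hx

theorem linfl1Norm_map_sum_smul {F : Type*} [AddCommGroup F] [Module ℝ F] {m N M : ℕ}
    (e : Fin m → F) (f : F →ₗ[ℝ] (Fin N → Fin M → ℝ)) (hf : ∀ i, 0 ≤ f (e i))
    {t : Fin m → ℝ} (ht : 0 ≤ t) :
    linfl1Norm (f (∑ i, t i • e i)) = ⨆ k, t ⬝ᵥ fun i => ∑ j, f (e i) k j := by
  simp only [map_sum, map_smul, linfl1Norm_sum_smul _ hf ht]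

section RowMass

variable {F : Type*} [AddCommGroup F] [Module ℝ F] {m N M : ℕ} (e : Fin m → F)
  {f₁ f₂ : F →ₗ[ℝ] (Fin N → Fin M → ℝ)}

theorem rowMass_mem_smul_solidConvexHull (hf₁ : ∀ i, 0 ≤ f₁ (e i)) (hf₂ : ∀ i, 0 ≤ f₂ (e i))
    {c : ℝ} (hc : 0 < c) (hdom : ∀ x, linfl1Norm (f₁ x) ≤ c * linfl1Norm (f₂ x)) (l : Fin N) :
    (fun i => ∑ j, f₁ (e i) l j) ∈
      c • solidConvexHull (Set.range fun k i => ∑ j, f₂ (e i) k j) := by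
  have : Nonempty (Fin N) := ⟨l⟩
  rw [Set.mem_smul_set_iff_inv_smul_mem₀ hc.ne']
  refine mem_solidConvexHull_of_dotProduct_le _
    (fun k i => Finset.sum_nonneg fun j _ => hf₂ i k j)
    (smul_nonneg (inv_nonneg.2 hc.le) fun i => Finset.sum_nonneg fun j _ => hf₁ i l j)
    fun t ht => ?_
  calc t ⬝ᵥ c⁻¹ • (fun i => ∑ j, f₁ (e i) l j)
      = c⁻¹ * t ⬝ᵥ fun i => ∑ j, f₁ (e i) l j := dotProduct_smul _ _ _
    _ ≤ c⁻¹ * linfl1Norm (f₁ (∑ i, t i • e i)) := by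
        rw [linfl1Norm_map_sum_smul e f₁ hf₁ ht]
        exact mul_le_mul_of_nonneg_left (le_ciSup (Finite.bddAbove_range
          fun k => t ⬝ᵥ fun i => ∑ j, f₁ (e i) k j) l) (inv_nonneg.2 hc.le)
    _ ≤ c⁻¹ * (c * linfl1Norm (f₂ (∑ i, t i • e i))) :=
        mul_le_mul_of_nonneg_left (hdom _) (inv_nonneg.2 hc.le)
    _ = ⨆ k, t ⬝ᵥ fun i => ∑ j, f₂ (e i) k j := by
        rw [inv_mul_cancel_left₀ hc.ne', linfl1Norm_map_sum_smul e f₂ hf₂ ht]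

theorem range_rowMass_subset_solidConvexHull (hf₁ : ∀ i, 0 ≤ f₁ (e i))
    (hf₂ : ∀ i, 0 ≤ f₂ (e i)) (hdom : ∀ x, linfl1Norm (f₁ x) ≤ linfl1Norm (f₂ x)) :
    Set.range (fun l i => ∑ j, f₁ (e i) l j) ⊆
      solidConvexHull (Set.range fun k i => ∑ j, f₂ (e i) k j) :=
  Set.range_subset_iff.2 fun l => by
    simpa only [one_smul] using rowMass_mem_smul_solidConvexHull e hf₁ hf₂ one_pos
      (fun x => (one_mul (linfl1Norm (f₂ x))).symm ▸ hdom x) l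

end RowMass

theorem stmt14_general {F : Type*} [NormedAddCommGroup F] [Lattice F]
    [NormedSpace ℝ F]
    {m N M : ℕ} (e : Fin m → F)
    (hpos : ∀ i, 0 < e i)
    {C : ℝ} (hC : 1 ≤ C)
    (f₁ f₂ : F →ₗ[ℝ] (Fin N → Fin M → ℝ))
    (hf₁lat : ∀ x y : F, f₁ (x ⊓ y) = f₁ x ⊓ f₁ y)
    (hf₂lat : ∀ x y : F, f₂ (x ⊓ y) = f₂ x ⊓ f₂ y)
    (hf₁ : ∀ x : F, (1 / C) * ‖x‖ ≤ linfl1Norm (f₁ x) ∧ linfl1Norm (f₁ x) ≤ C * ‖x‖)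
    (hf₂ : ∀ x : F, (1 / C) * ‖x‖ ≤ linfl1Norm (f₂ x) ∧ linfl1Norm (f₂ x) ≤ C * ‖x‖) :
    (∀ l : Fin N,
      (fun i => ∑ j, f₁ (e i) l j) ∈
        (C ^ 2) • solidConvexHull {w | ∃ k : Fin N, w = fun i => ∑ j, f₂ (e i) k j}) ∧
    ((∀ x : F, linfl1Norm (f₁ x) = ‖x‖) → (∀ x : F, linfl1Norm (f₂ x) = ‖x‖) →
      solidConvexHull {w | ∃ l : Fin N, w = fun i => ∑ j, f₁ (e i) l j} =
        solidConvexHull {w | ∃ k : Fin N, w = fun i => ∑ j, f₂ (e i) k j}) := by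
  have pos₁ i := map_nonneg_of_map_inf hf₁lat f₁.map_zero (hpos i).le
  have pos₂ i := map_nonneg_of_map_inf hf₂lat f₂.map_zero (hpos i).le
  have hrange (f : F →ₗ[ℝ] (Fin N → Fin M → ℝ)) :
      {w | ∃ k : Fin N, w = fun i => ∑ j, f (e i) k j} = Set.range fun k i => ∑ j, f (e i) k j := by
    ext; simp only [Set.mem_ofPred_eq, Set.mem_range, eq_comm]
  have hC0 : 0 < C := by linarith
  refine ⟨fun l => hrange f₂ ▸ rowMass_mem_smul_solidConvexHull e pos₁ pos₂
    (by positivity) (fun x => ?_) l, fun hiso₁ hiso₂ => ?_⟩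
  · have hx : ‖x‖ ≤ C * linfl1Norm (f₂ x) := by
      rw [← div_le_iff₀' hC0, ← one_div_mul_eq_div]; exact (hf₂ x).1
    calc linfl1Norm (f₁ x) ≤ C * ‖x‖ := (hf₁ x).2
      _ ≤ C * (C * linfl1Norm (f₂ x)) := mul_le_mul_of_nonneg_left hx hC0.le
      _ = C ^ 2 * linfl1Norm (f₂ x) := by ring
  · rw [hrange, hrange]
    exact (solidConvexHull_subset_solidConvexHull <| range_rowMass_subset_solidConvexHull e
        pos₁ pos₂ fun x => ((hiso₁ x).trans (hiso₂ x).symm).le).antisymm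
      (solidConvexHull_subset_solidConvexHull <| range_rowMass_subset_solidConvexHull e
        pos₂ pos₁ fun x => ((hiso₂ x).trans (hiso₁ x).symm).le)

/-- Let `F` be a finite dimensional Banach lattice with atoms `e₁, …, e_m` and
`f₁, f₂ : F → ℓ∞^N(ℓ₁^M)` two `C`-isometric lattice embeddings.  Writing `A l i`
(resp. `B l i`) for the total mass of `f₁ (e i)` (resp. `f₂ (e i)`) in row `l`, every row
vector `A l` lies in `C²` times the solid convex hull of the row vectors `{B k}`; in
particular, if both `f₁, f₂` are isometric, the two solid convex hulls coincide. -/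
theorem stmt14 {F : Type*} [NormedAddCommGroup F] [Lattice F] [IsOrderedAddMonoid F]
    [HasSolidNorm F] [NormedSpace ℝ F]
    [FiniteDimensional ℝ F]
    {m N M : ℕ} (e : Fin m → F)
    (hpos : ∀ i, 0 < e i)
    (hdisj : ∀ i j, i ≠ j → e i ⊓ e j = 0)
    (hspan : Submodule.span ℝ (Set.range e) = ⊤)
    {C : ℝ} (hC : 1 ≤ C)
    (f₁ f₂ : F →ₗ[ℝ] (Fin N → Fin M → ℝ))
    (hf₁lat : ∀ x y : F, f₁ (x ⊓ y) = f₁ x ⊓ f₁ y)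
    (hf₂lat : ∀ x y : F, f₂ (x ⊓ y) = f₂ x ⊓ f₂ y)
    (hf₁ : ∀ x : F, (1 / C) * ‖x‖ ≤ linfl1Norm (f₁ x) ∧ linfl1Norm (f₁ x) ≤ C * ‖x‖)
    (hf₂ : ∀ x : F, (1 / C) * ‖x‖ ≤ linfl1Norm (f₂ x) ∧ linfl1Norm (f₂ x) ≤ C * ‖x‖) :
    (∀ l : Fin N,
      (fun i => ∑ j, f₁ (e i) l j) ∈
        (C ^ 2) • solidConvexHull {w | ∃ k : Fin N, w = fun i => ∑ j, f₂ (e i) k j}) ∧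
    ((∀ x : F, linfl1Norm (f₁ x) = ‖x‖) → (∀ x : F, linfl1Norm (f₂ x) = ‖x‖) →
      solidConvexHull {w | ∃ l : Fin N, w = fun i => ∑ j, f₁ (e i) l j} =
        solidConvexHull {w | ∃ k : Fin N, w = fun i => ∑ j, f₂ (e i) k j}) :=
  stmt14_general e hpos hC f₁ f₂ hf₁lat hf₂lat hf₁ hf₂
end

section
/- Let 𝔅𝔏 be a separable Banach lattice that is approximately ultra-homogeneous for the class of finitely generated Banach lattices and isometrically universal for separable Banach lattices. Then 𝔅𝔏 is atomless: it contains no atoms. -/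
open TopologicalSpace

/-- The closed sublattice of a Banach lattice generated by a set `S`. -/
def latticeGen {E : Type*} [NormedAddCommGroup E] [Lattice E] [IsOrderedAddMonoid E] [HasSolidNorm E] [NormedSpace ℝ E]
    (S : Set E) : Set E :=
  ⋂₀ {T : Set E | IsClosed T ∧ S ⊆ T ∧ (∀ a ∈ T, ∀ b ∈ T, a + b ∈ T) ∧
      (∀ (c : ℝ), ∀ a ∈ T, c • a ∈ T) ∧ (∀ a ∈ T, ∀ b ∈ T, a ⊓ b ∈ T) ∧
      (∀ a ∈ T, ∀ b ∈ T, a ⊔ b ∈ T)}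

/-- A linear map between Banach lattices is an isometric lattice embedding if it preserves
the lattice operations and the norm. -/
def IsLatticeIsometricEmbedding {X Y : Type*}
    [NormedAddCommGroup X] [Lattice X] [IsOrderedAddMonoid X] [HasSolidNorm X] [NormedSpace ℝ X]
    [NormedAddCommGroup Y] [Lattice Y] [IsOrderedAddMonoid Y] [HasSolidNorm Y] [NormedSpace ℝ Y]
    (f : X →ₗ[ℝ] Y) : Prop :=
  (∀ x y : X, f (x ⊓ y) = f x ⊓ f y) ∧ (∀ x : X, ‖f x‖ = ‖x‖)

/-- `X` is approximately ultra-homogeneous for finitely generated Banach lattices: given a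
finitely generated Banach lattice `A` with generators `ā` and two isometric lattice
embeddings `ι, f : A → X` (`ι` realizing `A` as a sublattice `⟨ā⟩ ⊆ X`), for every
`ε > 0` there is a surjective lattice isometry `φ` of `X` with `‖f ā - φ (ι ā)‖ < ε`. -/
def ApproxUltraHomogeneous (X : Type*) [NormedAddCommGroup X] [Lattice X] [IsOrderedAddMonoid X] [HasSolidNorm X] [NormedSpace ℝ X] :
    Prop :=
  ∀ (A : Type) (_ : NormedAddCommGroup A) (_ : Lattice A) (_ : IsOrderedAddMonoid A)
      (_ : HasSolidNorm A) (_ : NormedSpace ℝ A) (_ : CompleteSpace A)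
    (n : ℕ) (a : Fin n → A), latticeGen (Set.range a) = Set.univ →
    ∀ (ι f : A →ₗ[ℝ] X),
      IsLatticeIsometricEmbedding ι → IsLatticeIsometricEmbedding f →
      ∀ ε : ℝ, 0 < ε →
        ∃ φ : X ≃ₗ[ℝ] X, (∀ x : X, ‖φ x‖ = ‖x‖) ∧ (∀ x y : X, φ (x ⊓ y) = φ x ⊓ φ y) ∧
          ∀ i, ‖f (a i) - φ (ι (a i))‖ < ε

/-- `X` is isometrically universal for separable Banach lattices. -/
def IsometricallyUniversalSep (X : Type*) [NormedAddCommGroup X] [Lattice X] [IsOrderedAddMonoid X] [HasSolidNorm X] [NormedSpace ℝ X] :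
    Prop :=
  ∀ (Y : Type) (_ : NormedAddCommGroup Y) (_ : Lattice Y) (_ : IsOrderedAddMonoid Y)
      (_ : HasSolidNorm Y) (_ : NormedSpace ℝ Y) (_ : CompleteSpace Y)
    (_ : SeparableSpace Y),
    ∃ f : Y →ₗ[ℝ] X, IsLatticeIsometricEmbedding f

/-!
Universality puts into `𝔅𝔏` two disjoint positive unit vectors `u, v` with `‖u ⊔ v‖ = 1` (the
unit vectors of `ℓ∞²`). If `e` were an atom, homogeneity applied to the one-dimensional
sublattices spanned by `e / ‖e‖` and by `u ⊔ v` would move the atom to within `1/2` of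
`u ⊔ v`. But an atom `b` meets at most one of two disjoint positive vectors, say `u ⊓ b = 0`,
and then `u = (u - b)⁺ ≤ (u ⊔ v - b)⁺`, so `1 = ‖u‖ ≤ ‖u ⊔ v - b‖`.
-/

open Filter Topology

section LatticeOrderedGroup

variable {α : Type*} [Lattice α] [AddCommGroup α] [IsOrderedAddMonoid α]

lemma nonneg_of_two_pow_nsmul_nonneg_s18 {x : α} (m : ℕ) (h : 0 ≤ 2 ^ m • x) : 0 ≤ x := by
  induction m generalizing x with
  | zero => simpa using h
  | succ m ih =>
    rw [pow_succ, mul_comm, mul_nsmul] at h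
    exact nsmul_two_semiclosed (ih h)

lemma dyadic_smul_nonneg [Module ℝ α] {x : α} (hx : 0 ≤ x) (k m : ℕ) :
    0 ≤ ((k : ℝ) / 2 ^ m) • x := by
  apply nonneg_of_two_pow_nsmul_nonneg_s18 m
  rw [← Nat.cast_smul_eq_nsmul ℝ, smul_smul, Nat.cast_pow, Nat.cast_ofNat,
    mul_div_cancel₀ _ (by positivity), Nat.cast_smul_eq_nsmul]
  exact nsmul_nonneg hx k

end LatticeOrderedGroup

section LatticeHom

variable {α β : Type*} [SemilatticeInf α] [SemilatticeInf β] {f : α → β}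

lemma monotone_of_map_inf (hf : ∀ x y, f (x ⊓ y) = f x ⊓ f y) : Monotone f := fun x y hxy => by
  rw [← inf_eq_left.2 hxy, hf]
  exact inf_le_right

lemma Function.Injective.map_le_map_iff_of_map_inf (hinj : Function.Injective f)
    (hf : ∀ x y, f (x ⊓ y) = f x ⊓ f y) {x y : α} : f x ≤ f y ↔ x ≤ y := by
  rw [← inf_eq_left, ← hf, hinj.eq_iff, inf_eq_left]

end LatticeHom

def IsLatticeAtom {E : Type*} [AddCommGroup E] [PartialOrder E] [Module ℝ E] (e : E) : Prop :=
  0 < e ∧ ∀ x : E, 0 ≤ x → x ≤ e → ∃ t : ℝ, 0 ≤ t ∧ t ≤ 1 ∧ x = t • e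

section VectorLattice

variable {E : Type*} [AddCommGroup E] [Lattice E] [Module ℝ E] {e b u v : E}

lemma IsLatticeAtom.map {F : Type*} [AddCommGroup F] [Lattice F] [Module ℝ F]
    (he : IsLatticeAtom e) (φ : E ≃ₗ[ℝ] F) (hφ : ∀ x y, φ (x ⊓ y) = φ x ⊓ φ y) :
    IsLatticeAtom (φ e) := by
  have hle : ∀ {x y}, φ x ≤ φ y ↔ x ≤ y := φ.injective.map_le_map_iff_of_map_inf hφ
  refine ⟨?_, fun x hx hxe => ?_⟩
  · rw [← map_zero φ]
    exact lt_of_le_of_ne (hle.2 he.1.le) (φ.injective.ne he.1.ne)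
  · obtain ⟨t, ht0, ht1, hxt⟩ := he.2 (φ.symm x) (hle.1 (by simpa using hx))
      (hle.1 (by simpa using hxe))
    exact ⟨t, ht0, ht1, by rw [← φ.apply_symm_apply x, hxt, map_smul]⟩

variable [PosSMulMono ℝ E]

lemma IsLatticeAtom.smul (he : IsLatticeAtom e) {c : ℝ} (hc : 0 < c) : IsLatticeAtom (c • e) := by
  refine ⟨(smul_nonneg hc.le he.1.le).lt_of_ne (smul_ne_zero hc.ne' he.1.ne').symm,
    fun x hx hxe => ?_⟩
  obtain ⟨t, ht0, ht1, hxt⟩ := he.2 (c⁻¹ • x) (smul_nonneg (inv_nonneg.2 hc.le) hx)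
    (by simpa [smul_smul, hc.ne'] using smul_le_smul_of_nonneg_left hxe (inv_nonneg.2 hc.le))
  refine ⟨t, ht0, ht1, ?_⟩
  rw [smul_comm, ← hxt, smul_inv_smul₀ hc.ne']

variable [IsOrderedAddMonoid E]

lemma inf_smul_of_nonneg (he : 0 ≤ e) (s t : ℝ) : (s ⊓ t) • e = s • e ⊓ t • e := by
  rcases le_total s t with h | h
  · rw [inf_eq_left.2 h, inf_eq_left.2 (smul_le_smul_of_nonneg_right h he)]
  · rw [inf_eq_right.2 h, inf_eq_right.2 (smul_le_smul_of_nonneg_right h he)]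

lemma IsLatticeAtom.inf_eq_zero_or_inf_eq_zero (hb : IsLatticeAtom b) (hu : 0 ≤ u) (hv : 0 ≤ v)
    (huv : u ⊓ v = 0) : u ⊓ b = 0 ∨ v ⊓ b = 0 := by
  obtain ⟨s, -, -, hsu⟩ := hb.2 (u ⊓ b) (le_inf hu hb.1.le) inf_le_right
  obtain ⟨t, -, -, htv⟩ := hb.2 (v ⊓ b) (le_inf hv hb.1.le) inf_le_right
  have hst : (s ⊓ t) • b = 0 := by
    rw [inf_smul_of_nonneg hb.1.le, ← hsu, ← htv, inf_inf_inf_comm, huv, inf_idem,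
      inf_eq_left.2 hb.1.le]
  rcases smul_eq_zero.1 hst with h | h
  · rcases le_total s t with hle | hle
    · left; rw [hsu, ← inf_eq_left.2 hle, h, zero_smul]
    · right; rw [htv, ← inf_eq_right.2 hle, h, zero_smul]
  · exact absurd h hb.1.ne'

end VectorLattice

section NormedLattice

variable {E : Type*} [NormedAddCommGroup E] [Lattice E] [IsOrderedAddMonoid E] [HasSolidNorm E]

/- Compatibility of the order with real scalars is not part of the structure: it follows from
the closedness of the positive cone, since `0 ≤ c • x` holds for dyadic `c`. -/
lemma HasSolidNorm.smul_nonneg [NormedSpace ℝ E] {c : ℝ} (hc : 0 ≤ c) {x : E} (hx : 0 ≤ x) :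
    0 ≤ c • x := by
  have hlim : Tendsto (fun m : ℕ => ((⌊c * 2 ^ m⌋₊ : ℝ) / 2 ^ m) • x) atTop (𝓝 (c • x)) :=
    ((tendsto_nat_floor_mul_div_atTop hc).comp
      (tendsto_pow_atTop_atTop_of_one_lt one_lt_two)).smul_const x
  exact isClosed_nonneg.mem_of_tendsto hlim (Eventually.of_forall fun m => dyadic_smul_nonneg hx _ m)

instance HasSolidNorm.posSMulMono [NormedSpace ℝ E] : PosSMulMono ℝ E :=
  PosSMulMono.of_smul_nonneg fun _ hc _ hx => HasSolidNorm.smul_nonneg hc hx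

lemma norm_le_norm_sub_of_inf_eq_zero {w y b : E} (hwy : w ≤ y) (hwb : w ⊓ b = 0) :
    ‖w‖ ≤ ‖y - b‖ := by
  have hw : (w - b)⁺ = w := by
    have h := inf_eq_sub_posPart_sub w b
    rwa [hwb, eq_comm, sub_eq_zero, eq_comm] at h
  refine HasSolidNorm.solid ?_
  calc |w| = (w - b)⁺ := by rw [hw, abs_of_nonneg (hw ▸ posPart_nonneg _)]
    _ ≤ (y - b)⁺ := posPart_mono (sub_le_sub_right hwy b)
    _ ≤ |y - b| := sup_le (le_abs_self _) (abs_nonneg _)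

lemma IsLatticeAtom.min_norm_le_norm_sup_sub [NormedSpace ℝ E] {b u v : E} (hb : IsLatticeAtom b)
    (hu : 0 ≤ u) (hv : 0 ≤ v) (huv : u ⊓ v = 0) : min ‖u‖ ‖v‖ ≤ ‖u ⊔ v - b‖ := by
  rcases hb.inf_eq_zero_or_inf_eq_zero hu hv huv with h | h
  · exact min_le_of_left_le (norm_le_norm_sub_of_inf_eq_zero le_sup_left h)
  · exact min_le_of_right_le (norm_le_norm_sub_of_inf_eq_zero le_sup_right h)

lemma isLatticeIsometricEmbedding_toSpanSingleton [NormedSpace ℝ E] {e : E} (he : 0 ≤ e)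
    (he1 : ‖e‖ = 1) : IsLatticeIsometricEmbedding (LinearMap.toSpanSingleton ℝ E e) :=
  ⟨inf_smul_of_nonneg he, fun t => by
    rw [LinearMap.toSpanSingleton_apply, norm_smul, he1, mul_one]⟩

end NormedLattice

instance Pi.hasSolidNorm {ι : Type*} [Fintype ι] {α : ι → Type*}
    [∀ i, NormedAddCommGroup (α i)] [∀ i, Lattice (α i)] [∀ i, HasSolidNorm (α i)] :
    HasSolidNorm (∀ i, α i) where
  solid _ b h := (pi_norm_le_iff_of_nonneg (norm_nonneg b)).2 fun i =>
    (HasSolidNorm.solid (h i)).trans (norm_le_pi_norm b i)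

lemma latticeGen_range_one : latticeGen (Set.range fun _ : Fin 1 => (1 : ℝ)) = Set.univ :=
  Set.eq_univ_of_forall fun x _ ⟨_, hS, _, hsmul, _⟩ => by simpa using hsmul x 1 (hS ⟨0, rfl⟩)

namespace IsLatticeIsometricEmbedding

variable {X Y : Type*}
  [NormedAddCommGroup X] [Lattice X] [IsOrderedAddMonoid X] [HasSolidNorm X] [NormedSpace ℝ X]
  [NormedAddCommGroup Y] [Lattice Y] [IsOrderedAddMonoid Y] [HasSolidNorm Y] [NormedSpace ℝ Y]
  {f : X →ₗ[ℝ] Y}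

lemma map_nonneg (hf : IsLatticeIsometricEmbedding f) {x : X} (hx : 0 ≤ x) : 0 ≤ f x :=
  map_zero f ▸ monotone_of_map_inf hf.1 hx

lemma map_sup (hf : IsLatticeIsometricEmbedding f) (x y : X) : f (x ⊔ y) = f x ⊔ f y := by
  rw [eq_sub_of_add_eq' (inf_add_sup x y), eq_sub_of_add_eq' (inf_add_sup (f x) (f y)), map_sub,
    map_add, hf.1]

end IsLatticeIsometricEmbedding

lemma IsometricallyUniversalSep.exists_disjoint_pair {X : Type*}
    [NormedAddCommGroup X] [Lattice X] [IsOrderedAddMonoid X] [HasSolidNorm X] [NormedSpace ℝ X]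
    (h : IsometricallyUniversalSep X) :
    ∃ u v : X, 0 ≤ u ∧ 0 ≤ v ∧ u ⊓ v = 0 ∧ ‖u‖ = 1 ∧ ‖v‖ = 1 ∧ ‖u ⊔ v‖ = 1 := by
  obtain ⟨g, hg⟩ := h (Fin 2 → ℝ) inferInstance inferInstance inferInstance inferInstance
    inferInstance inferInstance inferInstance
  have hnorm : ∀ i, ‖g (Pi.single i 1)‖ = 1 := fun i => by rw [hg.2, Pi.norm_single, norm_one]
  have hinf : (Pi.single 0 1 ⊓ Pi.single 1 1 : Fin 2 → ℝ) = 0 := by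
    ext i; fin_cases i <;> simp
  have hsup : (Pi.single 0 1 ⊔ Pi.single 1 1 : Fin 2 → ℝ) = 1 := by
    ext i; fin_cases i <;> simp
  refine ⟨g (Pi.single 0 1), g (Pi.single 1 1), hg.map_nonneg (Pi.single_nonneg.2 zero_le_one),
    hg.map_nonneg (Pi.single_nonneg.2 zero_le_one), ?_, hnorm 0, hnorm 1, ?_⟩
  · rw [← hg.1, hinf, map_zero]
  · rw [← hg.map_sup, hsup, hg.2, norm_one]

theorem stmt18_general {X : Type}
    [NormedAddCommGroup X] [Lattice X] [IsOrderedAddMonoid X] [HasSolidNorm X] [NormedSpace ℝ X]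
    (hhom : ApproxUltraHomogeneous X) (huniv : IsometricallyUniversalSep X) :
    ¬ ∃ e : X, 0 < e ∧
      ∀ x : X, 0 ≤ x → x ≤ e → ∃ t : ℝ, 0 ≤ t ∧ t ≤ 1 ∧ x = t • e := by
  rintro ⟨e, he⟩
  obtain ⟨u, v, hu, hv, huv, hun, hvn, hsupn⟩ := huniv.exists_disjoint_pair
  have he₁ : IsLatticeAtom (‖e‖⁻¹ • e) :=
    IsLatticeAtom.smul he (inv_pos.2 (norm_pos_iff.2 he.1.ne'))
  have he₁n : ‖‖e‖⁻¹ • e‖ = 1 := norm_smul_inv_norm he.1.ne'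
  obtain ⟨φ, -, hφ, hclose⟩ := hhom ℝ inferInstance inferInstance inferInstance
    inferInstance inferInstance inferInstance 1 (fun _ => 1) latticeGen_range_one _ _
    (isLatticeIsometricEmbedding_toSpanSingleton he₁.1.le he₁n)
    (isLatticeIsometricEmbedding_toSpanSingleton (hu.trans le_sup_left) hsupn) (1 / 2)
    one_half_pos
  have hfar := (he₁.map φ hφ).min_norm_le_norm_sup_sub hu hv huv
  have hnear := hclose 0
  simp only [LinearMap.toSpanSingleton_apply, one_smul] at hnear
  rw [hun, hvn, min_self] at hfar
  linarith

/-- A separable Banach lattice which is approximately ultra-homogeneous for finitely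
generated Banach lattices and isometrically universal for separable Banach lattices is
atomless: it contains no atom, i.e. no `e > 0` such that every `0 ≤ x ≤ e` is a multiple
`t • e` with `t ∈ [0, 1]`. -/
theorem stmt18 {X : Type}
    [NormedAddCommGroup X] [Lattice X] [IsOrderedAddMonoid X] [HasSolidNorm X] [NormedSpace ℝ X] [CompleteSpace X] [SeparableSpace X]
    (hhom : ApproxUltraHomogeneous X) (huniv : IsometricallyUniversalSep X) :
    ¬ ∃ e : X, 0 < e ∧
      ∀ x : X, 0 ≤ x → x ≤ e → ∃ t : ℝ, 0 ≤ t ∧ t ≤ 1 ∧ x = t • e :=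
  stmt18_general hhom huniv
end

section
/- The separable universal Banach lattice 𝒰 = C(Δ, L₁[0,1]) is not approximately ultra-homogeneous: letting a = 1_Δ ⊗ χ_{[0,1]} and b = 1_K ⊗ χ_{[0,1]} for a proper nonempty clopen K ⊆ Δ, both a and b have norm 1, but every surjective lattice isometry φ of 𝒰 satisfies ‖φ(b) − a‖ ≥ 1. -/
/-!
Let `c = a - b = 1_{Δ \ K} ⊗ χ_{[0,1]}`, a positive element of norm one. Since `φ` is a positive
isometry, `φ c` attains its norm `1` at some point `k`, and `φ a = φ b + φ c` has norm `1`. The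
`L₁`-norm is additive on positive elements, so `‖φ b k‖ + 1 ≤ ‖φ a k‖ ≤ 1`, i.e. `φ b k = 0`, and
then `‖(φ b - a) k‖ = ‖a k‖ = 1`.
-/

open MeasureTheory

noncomputable section

/-- Lebesgue measure on `[0,1]`. -/
abbrev μ01 : Measure ℝ := volume.restrict (Set.Icc (0 : ℝ) 1)

instance : IsFiniteMeasure μ01 :=
  ⟨by rw [Measure.restrict_apply_univ, Real.volume_Icc]; exact ENNReal.ofReal_lt_top⟩

/-- The element `χ_{[0,1]}` of `L₁[0,1]`, i.e. the constant function `1`. -/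
def oneL1 : Lp ℝ 1 μ01 := (memLp_const (1 : ℝ)).toLp _

namespace MeasureTheory.Lp

variable {α : Type*} [MeasurableSpace α] {μ : Measure α}

theorem norm_eq_integral_of_nonneg {f : Lp ℝ 1 μ} (hf : 0 ≤ f) : ‖f‖ = ∫ x, f x ∂μ := by
  rw [L1.norm_eq_integral_norm]
  refine integral_congr_ae ?_
  filter_upwards [(coeFn_nonneg f).2 hf] with x hx
  exact Real.norm_of_nonneg hx

theorem norm_add_of_nonneg {f g : Lp ℝ 1 μ} (hf : 0 ≤ f) (hg : 0 ≤ g) :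
    ‖f + g‖ = ‖f‖ + ‖g‖ := by
  rw [norm_eq_integral_of_nonneg hf, norm_eq_integral_of_nonneg hg,
    norm_eq_integral_of_nonneg (add_nonneg hf hg), integral_congr_ae (coeFn_add f g)]
  exact integral_add (L1.integrable_coeFn f) (L1.integrable_coeFn g)

end MeasureTheory.Lp

theorem norm_oneL1 : ‖oneL1‖ = 1 := by
  simp [oneL1, Lp.norm_const']

theorem oneL1_nonneg : 0 ≤ oneL1 := by
  rw [← Lp.coeFn_nonneg]
  filter_upwards [Lp.coeFn_const (μ := μ01) 1 (1 : ℝ)] with x hx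
  change 0 ≤ (Lp.const 1 μ01 (1 : ℝ)) x
  rw [hx]
  exact zero_le_one

namespace ContinuousMap

variable {X E : Type*} [TopologicalSpace X]

theorem norm_const [CompactSpace X] [Nonempty X] [NormedAddCommGroup E] (e : E) :
    ‖const X e‖ = ‖e‖ := by
  simp [norm_eq_iSup_norm]

/-- The function `1_K ⊗ e`. -/
def indicatorConst [TopologicalSpace E] [Zero E] {K : Set X} (hK : IsClopen K) (e : E) :
    C(X, E) :=
  ⟨K.indicator fun _ ↦ e, hK.continuous_indicator continuous_const⟩

@[simp]
theorem indicatorConst_apply [TopologicalSpace E] [Zero E] {K : Set X} (hK : IsClopen K) (e : E)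
    (x : X) : indicatorConst hK e x = K.indicator (fun _ ↦ e) x :=
  rfl

theorem indicatorConst_nonneg [TopologicalSpace E] [Zero E] [PartialOrder E] {K : Set X}
    (hK : IsClopen K) {e : E} (he : 0 ≤ e) : 0 ≤ indicatorConst hK e :=
  le_def.2 fun _ ↦ Set.indicator_nonneg (fun _ _ ↦ he) _

theorem const_sub_indicatorConst [TopologicalSpace E] [AddGroup E] [IsTopologicalAddGroup E]
    {K : Set X} (hK : IsClopen K) (e : E) :
    const X e - indicatorConst hK e = indicatorConst hK.compl e := by
  ext x
  simp [Set.indicator_compl]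

theorem norm_indicatorConst [CompactSpace X] [NormedAddCommGroup E] {K : Set X}
    (hK : IsClopen K) (hne : K.Nonempty) (e : E) : ‖indicatorConst hK e‖ = ‖e‖ := by
  refine le_antisymm ((norm_le _ (norm_nonneg e)).2 fun x ↦ ?_) ?_
  · exact norm_indicator_le_norm_self (fun _ ↦ e) x
  · obtain ⟨x, hx⟩ := hne
    simpa [hx] using norm_coe_le_norm (indicatorConst hK e) x

/-- At a point `x` where `‖g ·‖` is maximal, additivity of the `L₁`-norm on positive elements gives
`‖f x‖ + ‖g‖ ≤ ‖f + g‖`. -/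
theorem exists_apply_eq_zero_of_norm_add_le {α : Type*} [MeasurableSpace α] {μ : Measure α}
    [CompactSpace X] [Nonempty X] {f g : C(X, Lp ℝ 1 μ)} (hf : 0 ≤ f) (hg : 0 ≤ g)
    (h : ‖f + g‖ ≤ ‖g‖) : ∃ x, f x = 0 := by
  obtain ⟨x, hx⟩ := g.continuous.norm.exists_forall_ge
    (by rw [Filter.cocompact_eq_bot]; exact Filter.tendsto_bot)
  have hgx : ‖g‖ ≤ ‖g x‖ := (norm_le _ (norm_nonneg _)).2 hx
  have hadd : ‖f x + g x‖ = ‖f x‖ + ‖g x‖ := Lp.norm_add_of_nonneg (le_def.1 hf x) (le_def.1 hg x)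
  have hfg : ‖f x + g x‖ ≤ ‖f + g‖ := norm_coe_le_norm (f + g) x
  exact ⟨x, norm_le_zero_iff.1 (by linarith)⟩

end ContinuousMap

/-- The separable universal Banach lattice `𝒰 = C(Δ, L₁[0,1])` (where `Δ = {0,1}^ℕ` is the
Cantor set) is not approximately ultra-homogeneous: for a proper nonempty clopen
`K ⊆ Δ`, the elements `a = 1_Δ ⊗ χ_{[0,1]}` and `b = 1_K ⊗ χ_{[0,1]}` both have norm `1`,
but every surjective lattice isometry `φ` of `𝒰` satisfies `‖φ b - a‖ ≥ 1`. -/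
theorem stmt19 (K : Set (ℕ → Bool)) (hK : IsClopen K) (hne : K.Nonempty)
    (hproper : K ≠ Set.univ) :
    ∃ a b : C((ℕ → Bool), Lp ℝ 1 μ01),
      (∀ k, a k = oneL1) ∧
      (∀ k ∈ K, b k = oneL1) ∧ (∀ k ∉ K, b k = 0) ∧
      ‖a‖ = 1 ∧ ‖b‖ = 1 ∧
      ∀ φ : C((ℕ → Bool), Lp ℝ 1 μ01) ≃ₗ[ℝ] C((ℕ → Bool), Lp ℝ 1 μ01),
        (∀ f, ‖φ f‖ = ‖f‖) →
        (∀ f g : C((ℕ → Bool), Lp ℝ 1 μ01), (∀ k, f k ≤ g k) ↔ (∀ k, φ f k ≤ φ g k)) →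
        1 ≤ ‖φ b - a‖ := by
  obtain ⟨k, hk⟩ := (Set.ne_univ_iff_exists_notMem K).1 hproper
  set a := ContinuousMap.const (ℕ → Bool) oneL1
  set b := ContinuousMap.indicatorConst hK oneL1
  have hab : a - b = ContinuousMap.indicatorConst hK.compl oneL1 :=
    ContinuousMap.const_sub_indicatorConst hK oneL1
  refine ⟨a, b, fun _ ↦ rfl, fun _ hx ↦ Set.indicator_of_mem hx fun _ ↦ oneL1,
    fun _ hx ↦ Set.indicator_of_notMem hx fun _ ↦ oneL1,
    by rw [ContinuousMap.norm_const, norm_oneL1],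
    by rw [ContinuousMap.norm_indicatorConst hK hne, norm_oneL1], fun φ hnorm horder ↦ ?_⟩
  have hpos : ∀ f, 0 ≤ f → 0 ≤ φ f := fun f hf ↦ by
    simpa only [map_zero] using
      ContinuousMap.le_def.2 ((horder 0 f).1 (ContinuousMap.le_def.1 hf))
  obtain ⟨x, hx⟩ := ContinuousMap.exists_apply_eq_zero_of_norm_add_le
    (hpos b (ContinuousMap.indicatorConst_nonneg hK oneL1_nonneg))
    (hpos (a - b) (hab ▸ ContinuousMap.indicatorConst_nonneg hK.compl oneL1_nonneg))
    (by rw [← map_add, add_sub_cancel, hnorm, hnorm, hab,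
      ContinuousMap.norm_indicatorConst _ ⟨k, hk⟩, ContinuousMap.norm_const, norm_oneL1])
  calc 1 = ‖(φ b - a) x‖ := by simp [hx, a, norm_oneL1]
    _ ≤ ‖φ b - a‖ := ContinuousMap.norm_coe_le_norm _ x

end
end
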